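/- arXiv:1707.03943 — 6 statements merged into one kernel-verified Lean document; each statement's English description precedes it below -/
import Mathlib

section
/- Let X be a set, let k ≥ 1, and let f_1, …, f_k : X → X be maps. For a word w = (w_1, …, w_n) ∈ {1,…,k}ⁿ write f_w = f_{w_1} ∘ ⋯ ∘ f_{w_n} (the identity for n = 0), and for a function h : X → ℝ and P ∈ X write S_n(h, P) = Σ_{w ∈ {1,…,k}ⁿ} max(1, h(f_w(P))). Suppose h, h' : X → ℝ are functions for which there exist real numbers m, m' ≥ 1 and C, C' ≥ 0 with h'(Q) ≤ m·h(Q) + C and h(Q) ≤ m'·h'(Q) + C' for all Q ∈ X. Then for every P ∈ X, limsup_{n→∞} S_n(h', P)^{1/n} = limsup_{n→∞} S_n(h, P)^{1/n} and liminf_{n→∞} S_n(h', P)^{1/n} = liminf_{n→∞} S_n(h, P)^{1/n}. Consequently the upper and lower arithmetic degrees (1/k)·limsup_{n→∞} S_n(h, P)^{1/n} and (1/k)·liminf_{n→∞} S_n(h, P)^{1/n} do not depend on the choice of the height function h within a commensurability class. -/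
/-!
Commensurable heights satisfy `max 1 h' ≤ c · max 1 h` pointwise for a constant `c ≥ 1`, hence
`S_n(h') ≤ c · S_n(h)` and `S_n(h')^{1/n} ≤ c^{1/n} · S_n(h)^{1/n}`, and symmetrically. Since
`c^{1/n} → 1`, two nonnegative sequences that dominate each other up to such factors have the same
`limsup` and the same `liminf`.
-/

open Filter Topology

/-- `compWord f w P` is the composite `f_{w_1} ∘ ⋯ ∘ f_{w_n}` applied to `P`,
for the word `w = (w_1, …, w_n)` over the alphabet `Fin k`. -/
def compWord {X : Type*} {k : ℕ} (f : Fin k → X → X) : List (Fin k) → X → X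
  | [], P => P
  | i :: w, P => f i (compWord f w P)

/-- `heightSum f g n P = Σ_{w ∈ {1,…,k}ⁿ} g (f_w P)`, the sum over all `kⁿ` words of length `n`. -/
noncomputable def heightSum {X : Type*} {k : ℕ} (f : Fin k → X → X) (g : X → ℝ)
    (n : ℕ) (P : X) : ℝ :=
  ∑ w : Fin n → Fin k, g (compWord f (List.ofFn w) P)

namespace Filter

variable {ι : Type*} {l : Filter ι} [l.NeBot] {a b r r' : ι → ℝ}

lemma IsBoundedUnder.of_le_mul (hr : Tendsto r l (𝓝 1)) (hb : 0 ≤ᶠ[l] b)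
    (hbb : IsBoundedUnder (· ≤ ·) l b) (hab : a ≤ᶠ[l] r * b) :
    IsBoundedUnder (· ≤ ·) l a :=
  (isBoundedUnder_le_mul_of_nonneg (hr.eventually_const_le zero_lt_one).frequently
    hr.isBoundedUnder_le hb hbb).mono_le hab

lemma IsCoboundedUnder.of_le_mul (hr : Tendsto r l (𝓝 1)) (hb : 0 ≤ᶠ[l] b)
    (hbc : IsCoboundedUnder (· ≥ ·) l b) (hab : a ≤ᶠ[l] r * b) :
    IsCoboundedUnder (· ≥ ·) l a := by
  obtain ⟨V, hV⟩ := (isCoboundedUnder_ge_mul_of_nonneg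
    (hr.eventually_const_le zero_lt_one) hr.isBoundedUnder_le hb hbc).frequently_le
  exact IsCoboundedUnder.of_frequently_le ((hV.and_eventually hab).mono fun _ h ↦ h.2.trans h.1)

lemma limsup_le_limsup_of_le_mul (hr : Tendsto r l (𝓝 1)) (ha : 0 ≤ᶠ[l] a)
    (hb : 0 ≤ᶠ[l] b) (hbb : IsBoundedUnder (· ≤ ·) l b) (hab : a ≤ᶠ[l] r * b) :
    limsup a l ≤ limsup b l := by
  have hr₀ : ∃ᶠ i in l, 0 ≤ r i := (hr.eventually_const_le zero_lt_one).frequently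
  calc limsup a l
      ≤ limsup (r * b) l := limsup_le_limsup hab (isCoboundedUnder_le_of_eventually_le l ha)
        (isBoundedUnder_le_mul_of_nonneg hr₀ hr.isBoundedUnder_le hb hbb)
    _ ≤ limsup r l * limsup b l := limsup_mul_le hr₀ hr.isBoundedUnder_le hb hbb
    _ = limsup b l := by rw [hr.limsup_eq, one_mul]

lemma liminf_le_liminf_of_le_mul (hr : Tendsto r l (𝓝 1)) (ha : 0 ≤ᶠ[l] a)
    (hb : 0 ≤ᶠ[l] b) (hbc : IsCoboundedUnder (· ≥ ·) l b) (hab : a ≤ᶠ[l] r * b) :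
    liminf a l ≤ liminf b l := by
  have hr₀ : 0 ≤ᶠ[l] r := hr.eventually_const_le zero_lt_one
  calc liminf a l
      ≤ liminf (r * b) l := liminf_le_liminf hab (isBoundedUnder_of_eventually_ge ha)
        (isCoboundedUnder_ge_mul_of_nonneg hr₀ hr.isBoundedUnder_le hb hbc)
    _ ≤ limsup r l * liminf b l := liminf_mul_le hr₀ hr.isBoundedUnder_le hb hbc
    _ = liminf b l := by rw [hr.limsup_eq, one_mul]

lemma limsup_eq_of_le_mul_of_le_mul (hr : Tendsto r l (𝓝 1))
    (hr' : Tendsto r' l (𝓝 1)) (ha : 0 ≤ᶠ[l] a) (hb : 0 ≤ᶠ[l] b)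
    (hab : a ≤ᶠ[l] r * b) (hba : b ≤ᶠ[l] r' * a) :
    limsup a l = limsup b l := by
  by_cases hbb : IsBoundedUnder (· ≤ ·) l b
  · have haa := hbb.of_le_mul hr hb hab
    exact le_antisymm (limsup_le_limsup_of_le_mul hr ha hb hbb hab)
      (limsup_le_limsup_of_le_mul hr' hb ha haa hba)
  -- Unbounded above, both sides are the junk value `0`.
  · have haa : ¬ IsBoundedUnder (· ≤ ·) l a := fun haa ↦ hbb (haa.of_le_mul hr' ha hba)
    rw [Real.limsup_of_not_isBoundedUnder haa, Real.limsup_of_not_isBoundedUnder hbb]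

lemma liminf_eq_of_le_mul_of_le_mul (hr : Tendsto r l (𝓝 1))
    (hr' : Tendsto r' l (𝓝 1)) (ha : 0 ≤ᶠ[l] a) (hb : 0 ≤ᶠ[l] b)
    (hab : a ≤ᶠ[l] r * b) (hba : b ≤ᶠ[l] r' * a) :
    liminf a l = liminf b l := by
  by_cases hbc : IsCoboundedUnder (· ≥ ·) l b
  · have hac := hbc.of_le_mul hr hb hab
    exact le_antisymm (liminf_le_liminf_of_le_mul hr ha hb hbc hab)
      (liminf_le_liminf_of_le_mul hr' hb ha hac hba)
  -- Not cobounded (tending to `+∞`), both sides are the junk value `0`.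
  · have hac : ¬ IsCoboundedUnder (· ≥ ·) l a := fun hac ↦ hbc (hac.of_le_mul hr' ha hba)
    rw [Real.liminf_of_not_isCoboundedUnder hac, Real.liminf_of_not_isCoboundedUnder hbc]

end Filter

lemma tendsto_const_rpow_inv_natCast {c : ℝ} (hc : 0 < c) :
    Tendsto (fun n : ℕ ↦ c ^ (n : ℝ)⁻¹) atTop (𝓝 1) := by
  simpa [Function.comp_def] using (Real.continuousAt_const_rpow hc.ne').tendsto.comp
    (tendsto_inv_atTop_zero.comp tendsto_natCast_atTop_atTop)

lemma max_one_le_add_mul_max_one {x y m C : ℝ} (hm : 1 ≤ m) (hC : 0 ≤ C)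
    (h : y ≤ m * x + C) : max 1 y ≤ (m + C) * max 1 x := by
  have hx₁ := le_max_left 1 x
  have hx := le_max_right 1 x
  exact max_le (by nlinarith) (by nlinarith)

section heightSum

variable {X : Type*} {k : ℕ} (f : Fin k → X → X) {g g' : X → ℝ}

lemma heightSum_nonneg (hg : ∀ Q, 0 ≤ g Q) (n : ℕ) (P : X) : 0 ≤ heightSum f g n P :=
  Finset.sum_nonneg fun _ _ ↦ hg _

lemma heightSum_le_mul_heightSum {c : ℝ} (h : ∀ Q, g' Q ≤ c * g Q) (n : ℕ) (P : X) :
    heightSum f g' n P ≤ c * heightSum f g n P := by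
  rw [heightSum, heightSum, Finset.mul_sum]
  exact Finset.sum_le_sum fun _ _ ↦ h _

lemma heightSum_rpow_inv_le {c : ℝ} (hc : 0 ≤ c) (hg : ∀ Q, 0 ≤ g Q) (hg' : ∀ Q, 0 ≤ g' Q)
    (h : ∀ Q, g' Q ≤ c * g Q) (n : ℕ) (P : X) :
    heightSum f g' n P ^ (n : ℝ)⁻¹ ≤ c ^ (n : ℝ)⁻¹ * heightSum f g n P ^ (n : ℝ)⁻¹ :=
  (Real.rpow_le_rpow (heightSum_nonneg f hg' n P) (heightSum_le_mul_heightSum f h n P)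
    (by positivity)).trans_eq (Real.mul_rpow hc (heightSum_nonneg f hg n P))

end heightSum

theorem arithmetic_degree_independent_of_height_general {X : Type*} {k : ℕ}
    (f : Fin k → X → X) (h h' : X → ℝ) (m m' C C' : ℝ)
    (hm : 1 ≤ m) (hm' : 1 ≤ m') (hC : 0 ≤ C) (hC' : 0 ≤ C')
    (h₁ : ∀ Q : X, h' Q ≤ m * h Q + C) (h₂ : ∀ Q : X, h Q ≤ m' * h' Q + C')
    (P : X) :
    Filter.limsup (fun n : ℕ =>
        heightSum f (fun Q => max 1 (h' Q)) n P ^ ((n : ℝ)⁻¹)) atTop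
      = Filter.limsup (fun n : ℕ =>
        heightSum f (fun Q => max 1 (h Q)) n P ^ ((n : ℝ)⁻¹)) atTop ∧
    Filter.liminf (fun n : ℕ =>
        heightSum f (fun Q => max 1 (h' Q)) n P ^ ((n : ℝ)⁻¹)) atTop
      = Filter.liminf (fun n : ℕ =>
        heightSum f (fun Q => max 1 (h Q)) n P ^ ((n : ℝ)⁻¹)) atTop := by
  have hmax : ∀ (g : X → ℝ) Q, 0 ≤ max 1 (g Q) := fun _ _ ↦ zero_le_one.trans (le_max_left _ _)
  have hroot : ∀ g : X → ℝ,
      0 ≤ᶠ[atTop] fun n : ℕ ↦ heightSum f (fun Q ↦ max 1 (g Q)) n P ^ (n : ℝ)⁻¹ :=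
    fun g ↦ .of_forall fun n ↦ Real.rpow_nonneg (heightSum_nonneg f (hmax g) n P) _
  have hr := tendsto_const_rpow_inv_natCast (show 0 < m + C by linarith)
  have hr' := tendsto_const_rpow_inv_natCast (show 0 < m' + C' by linarith)
  have hle : ∀ n : ℕ, _ := heightSum_rpow_inv_le f (by linarith) (hmax h) (hmax h')
    (fun Q ↦ max_one_le_add_mul_max_one hm hC (h₁ Q)) (P := P)
  have hle' : ∀ n : ℕ, _ := heightSum_rpow_inv_le f (by linarith) (hmax h') (hmax h)
    (fun Q ↦ max_one_le_add_mul_max_one hm' hC' (h₂ Q)) (P := P)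
  exact ⟨limsup_eq_of_le_mul_of_le_mul hr hr' (hroot h') (hroot h) (.of_forall hle)
      (.of_forall hle'),
    liminf_eq_of_le_mul_of_le_mul hr hr' (hroot h') (hroot h) (.of_forall hle) (.of_forall hle')⟩

/-- the upper and lower arithmetic degrees do not depend on the choice of
height function within a commensurability class: if `h' ≤ m·h + C` and `h ≤ m'·h' + C'`
pointwise (with `m, m' ≥ 1`, `C, C' ≥ 0`) and `S_n(h,P) = Σ_w max 1 (h (f_w P))`, then
`limsup S_n(h',P)^{1/n} = limsup S_n(h,P)^{1/n}` and likewise for `liminf`. -/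
theorem arithmetic_degree_independent_of_height {X : Type*} {k : ℕ} (hk : 1 ≤ k)
    (f : Fin k → X → X) (h h' : X → ℝ) (m m' C C' : ℝ)
    (hm : 1 ≤ m) (hm' : 1 ≤ m') (hC : 0 ≤ C) (hC' : 0 ≤ C')
    (h₁ : ∀ Q : X, h' Q ≤ m * h Q + C) (h₂ : ∀ Q : X, h Q ≤ m' * h' Q + C')
    (P : X) :
    Filter.limsup (fun n : ℕ =>
        heightSum f (fun Q => max 1 (h' Q)) n P ^ ((n : ℝ)⁻¹)) atTop
      = Filter.limsup (fun n : ℕ =>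
        heightSum f (fun Q => max 1 (h Q)) n P ^ ((n : ℝ)⁻¹)) atTop ∧
    Filter.liminf (fun n : ℕ =>
        heightSum f (fun Q => max 1 (h' Q)) n P ^ ((n : ℝ)⁻¹)) atTop
      = Filter.liminf (fun n : ℕ =>
        heightSum f (fun Q => max 1 (h Q)) n P ^ ((n : ℝ)⁻¹)) atTop :=
  arithmetic_degree_independent_of_height_general f h h' m m' C C' hm hm' hC hC' h₁ h₂ P
end

section
/- Let X be a set, let k ≥ 1, and let f_1, …, f_k : X → X be maps. For a word w ∈ {1,…,k}ⁿ write f_w for the corresponding n-fold composite, and for h : X → ℝ with h ≥ 1 pointwise and P ∈ X write S_n(h, P) = Σ_{w ∈ {1,…,k}ⁿ} h(f_w(P)). Suppose that the limit α = (1/k)·lim_{n→∞} S_n(h, P)^{1/n} exists and that k·α > 1. Then for every B > 1 the set {n ≥ 0 : S_n(h, P) ≤ B} is finite, and lim_{B→∞} #{n ≥ 0 : S_n(h, P) ≤ B} / log B = 1 / log(k·α). -/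
open Filter Topology

/-! Since `S_n > 0`, the hypothesis says `log S_n / n → log (kα) > 0`. For any real sequence
with `u n / n → L > 0`, eventually `(L - ε) n ≤ u n ≤ (L + ε) n`, so the sublevel set
`{n | u n ≤ t}` differs from `[0, t / (L ± ε)]` by a bounded number of indices and has
`t / L + o(t)` elements. Apply this to `u n = log S_n` at `t = log B`. -/

section SublevelCount

variable {u : ℕ → ℝ} {L ℓ t : ℝ} {N : ℕ}

lemma eventually_mul_le_of_tendsto_div (hu : Tendsto (fun n : ℕ => u n / n) atTop (𝓝 L))
    (hℓ : ℓ < L) : ∀ᶠ n : ℕ in atTop, ℓ * n ≤ u n := by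
  filter_upwards [hu.eventually (lt_mem_nhds hℓ), eventually_gt_atTop 0] with n hn hn0
  exact ((lt_div_iff₀ (by positivity)).1 hn).le

lemma eventually_le_mul_of_tendsto_div (hu : Tendsto (fun n : ℕ => u n / n) atTop (𝓝 L))
    (hℓ : L < ℓ) : ∀ᶠ n : ℕ in atTop, u n ≤ ℓ * n := by
  filter_upwards [hu.eventually (gt_mem_nhds hℓ), eventually_gt_atTop 0] with n hn hn0
  exact ((div_lt_iff₀ (by positivity)).1 hn).le

lemma setOf_le_subset_range (hℓ : 0 < ℓ) (hN : ∀ n ≥ N, ℓ * n ≤ u n) (t : ℝ) :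
    {n | u n ≤ t} ⊆ Finset.range (N + ⌊t / ℓ⌋₊ + 1) := by
  intro n (hn : u n ≤ t)
  rw [Finset.coe_range, Set.mem_Iio]
  by_cases hnN : n < N
  · omega
  · have hnt : (n : ℝ) ≤ t / ℓ := by
      rw [le_div_iff₀' hℓ]
      exact (hN n (not_lt.1 hnN)).trans hn
    have := Nat.le_floor hnt
    omega

lemma finite_setOf_le_of_tendsto_div (hL : 0 < L)
    (hu : Tendsto (fun n : ℕ => u n / n) atTop (𝓝 L)) (t : ℝ) : {n | u n ≤ t}.Finite := by
  obtain ⟨N, hN⟩ := eventually_atTop.1 (eventually_mul_le_of_tendsto_div hu (half_lt_self hL))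
  exact (Finset.finite_toSet _).subset (setOf_le_subset_range (half_pos hL) hN t)

lemma ncard_setOf_le_le (hℓ : 0 < ℓ) (hN : ∀ n ≥ N, ℓ * n ≤ u n) (ht : 0 ≤ t) :
    ({n | u n ≤ t}.ncard : ℝ) ≤ N + 1 + t / ℓ := by
  have hcard := Set.ncard_le_ncard (setOf_le_subset_range hℓ hN t) (Finset.finite_toSet _)
  rw [Set.ncard_coe_finset, Finset.card_range] at hcard
  have hfloor := Nat.floor_le (div_nonneg ht hℓ.le)
  calc ({n | u n ≤ t}.ncard : ℝ) ≤ ((N + ⌊t / ℓ⌋₊ + 1 : ℕ) : ℝ) := by exact_mod_cast hcard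
    _ ≤ N + 1 + t / ℓ := by push_cast; linarith

lemma le_ncard_setOf_le (hfin : {n | u n ≤ t}.Finite) (hℓ : 0 < ℓ)
    (hN : ∀ n ≥ N, u n ≤ ℓ * n) (ht : 0 ≤ t) :
    t / ℓ - N ≤ ({n | u n ≤ t}.ncard : ℝ) := by
  have hsub : (Finset.Icc N ⌊t / ℓ⌋₊ : Set ℕ) ⊆ {n | u n ≤ t} := by
    intro n hn
    rw [Finset.coe_Icc, Set.mem_Icc] at hn
    have hnt : (n : ℝ) ≤ t / ℓ := (Nat.le_floor_iff (div_nonneg ht hℓ.le)).1 hn.2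
    exact (hN n hn.1).trans ((le_div_iff₀' hℓ).1 hnt)
  have hcard := Set.ncard_le_ncard hsub hfin
  rw [Set.ncard_coe_finset, Nat.card_Icc] at hcard
  have hcard' : ((⌊t / ℓ⌋₊ + 1 : ℕ) : ℝ) ≤ (({n | u n ≤ t}.ncard + N : ℕ) : ℝ) := by
    exact_mod_cast (by omega : ⌊t / ℓ⌋₊ + 1 ≤ {n | u n ≤ t}.ncard + N)
  push_cast at hcard'
  linarith [Nat.lt_floor_add_one (t / ℓ)]

theorem tendsto_ncard_setOf_le_div (hL : 0 < L)
    (hu : Tendsto (fun n : ℕ => u n / n) atTop (𝓝 L)) :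
    Tendsto (fun t => ({n | u n ≤ t}.ncard : ℝ) / t) atTop (𝓝 L⁻¹) := by
  refine tendsto_order.2 ⟨fun c hc => ?_, fun d hd => ?_⟩
  · obtain ⟨m, hcm, hmL⟩ := exists_between (max_lt hc (inv_pos.2 hL))
    have hm : 0 < m := (le_max_right _ _).trans_lt hcm
    obtain ⟨N, hN⟩ := eventually_atTop.1
      (eventually_le_mul_of_tendsto_div hu ((lt_inv_comm₀ hL hm).2 hmL))
    have hlim : Tendsto (fun t : ℝ => m - N / t) atTop (𝓝 m) := by
      simpa using (tendsto_const_nhds (x := m)).sub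
        ((tendsto_const_nhds (x := (N : ℝ))).div_atTop tendsto_id)
    filter_upwards [hlim.eventually (lt_mem_nhds ((le_max_left _ _).trans_lt hcm)),
      eventually_gt_atTop 0] with t hct ht
    calc c < m - N / t := hct
      _ = (t / m⁻¹ - N) / t := by field_simp
      _ ≤ ({n | u n ≤ t}.ncard : ℝ) / t := by
        gcongr
        exact le_ncard_setOf_le (finite_setOf_le_of_tendsto_div hL hu t) (inv_pos.2 hm) hN ht.le
  · have hd0 : 0 < d := (inv_pos.2 hL).trans hd
    obtain ⟨ℓ, hdℓ, hℓL⟩ := exists_between ((inv_lt_comm₀ hL hd0).1 hd)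
    have hℓ : 0 < ℓ := (inv_pos.2 hd0).trans hdℓ
    obtain ⟨N, hN⟩ := eventually_atTop.1 (eventually_mul_le_of_tendsto_div hu hℓL)
    have hlim : Tendsto (fun t : ℝ => ℓ⁻¹ + (N + 1) / t) atTop (𝓝 ℓ⁻¹) := by
      simpa using (tendsto_const_nhds (x := ℓ⁻¹)).add
        ((tendsto_const_nhds (x := (N : ℝ) + 1)).div_atTop tendsto_id)
    filter_upwards [hlim.eventually (gt_mem_nhds ((inv_lt_comm₀ hd0 hℓ).1 hdℓ)),
      eventually_gt_atTop 0] with t hdt ht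
    calc ({n | u n ≤ t}.ncard : ℝ) / t ≤ (N + 1 + t / ℓ) / t := by
          gcongr
          exact ncard_setOf_le_le hℓ hN ht.le
      _ = ℓ⁻¹ + (N + 1) / t := by field_simp; ring
      _ < d := hdt

end SublevelCount

lemma heightSum_pos {X : Type*} {k : ℕ} [NeZero k] (f : Fin k → X → X) {g : X → ℝ}
    (hg : ∀ Q, 0 < g Q) (n : ℕ) (P : X) : 0 < heightSum f g n P :=
  Finset.sum_pos (fun _ _ => hg _) Finset.univ_nonempty

theorem counting_orbit_heights_general {X : Type*} {k : ℕ}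
    (f : Fin k → X → X) (h : X → ℝ) (hh : ∀ Q : X, 1 ≤ h Q) (P : X) (α : ℝ)
    (hα : Tendsto (fun n : ℕ => heightSum f h n P ^ ((n : ℝ)⁻¹)) atTop
      (𝓝 ((k : ℝ) * α)))
    (hkα : 1 < (k : ℝ) * α) :
    (∀ B : ℝ, 1 < B → {n : ℕ | heightSum f h n P ≤ B}.Finite) ∧
    Tendsto (fun B : ℝ => ({n : ℕ | heightSum f h n P ≤ B}.ncard : ℝ) / Real.log B)
      atTop (𝓝 (1 / Real.log ((k : ℝ) * α))) := by
  have : NeZero k := ⟨by rintro rfl; norm_num at hkα⟩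
  have hS (n : ℕ) : 0 < heightSum f h n P :=
    heightSum_pos f (fun Q => one_pos.trans_le (hh Q)) n P
  have hlogS : Tendsto (fun n : ℕ => Real.log (heightSum f h n P) / n) atTop
      (𝓝 (Real.log (k * α))) :=
    ((Real.continuousAt_log (zero_lt_one.trans hkα).ne').tendsto.comp hα).congr fun n => by
      simp [Real.log_rpow (hS n), div_eq_inv_mul]
  have hsublevel_log (B : ℝ) (hB : 0 < B) : {n : ℕ | heightSum f h n P ≤ B} =
      {n : ℕ | Real.log (heightSum f h n P) ≤ Real.log B} := by
    simp only [Real.log_le_log_iff (hS _) hB]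
  refine ⟨fun B hB => ?_, ?_⟩
  · rw [hsublevel_log B (by linarith)]
    exact finite_setOf_le_of_tendsto_div (Real.log_pos hkα) hlogS _
  · rw [one_div]
    refine ((tendsto_ncard_setOf_le_div (Real.log_pos hkα) hlogS).comp
      Real.tendsto_log_atTop).congr' ?_
    filter_upwards [eventually_gt_atTop 0] with B hB
    simp only [Function.comp_apply, hsublevel_log B hB]

/-- if `h ≥ 1` pointwise, the arithmetic degree
`α = (1/k)·lim_n S_n(h,P)^{1/n}` exists and `k·α > 1`, then for every `B > 1` the set
`{n : S_n(h,P) ≤ B}` is finite, and `#{n : S_n(h,P) ≤ B} / log B → 1 / log(k·α)`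
as `B → ∞`. -/
theorem counting_orbit_heights {X : Type*} {k : ℕ} (hk : 1 ≤ k)
    (f : Fin k → X → X) (h : X → ℝ) (hh : ∀ Q : X, 1 ≤ h Q) (P : X) (α : ℝ)
    (hα : Tendsto (fun n : ℕ => heightSum f h n P ^ ((n : ℝ)⁻¹)) atTop
      (𝓝 ((k : ℝ) * α)))
    (hkα : 1 < (k : ℝ) * α) :
    (∀ B : ℝ, 1 < B → {n : ℕ | heightSum f h n P ≤ B}.Finite) ∧
    Tendsto (fun B : ℝ => ({n : ℕ | heightSum f h n P ≤ B}.ncard : ℝ) / Real.log B)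
      atTop (𝓝 (1 / Real.log ((k : ℝ) * α))) :=
  counting_orbit_heights_general f h hh P α hα hkα
end

section
/- Let k ≥ 1 be an integer, let C₁, C₂ ≥ 0 be real constants, and let a₀ ≥ 1. For each n ≥ 0 let 𝒜_n be a multiset of kⁿ positive real numbers, with 𝒜₀ = {a₀}, and suppose that for all n ≥ 1, Σ_{a ∈ 𝒜_n} a ≤ Σ_{a ∈ 𝒜_{n−1}} a + C₁·(Σ_{a ∈ 𝒜_{n−1}} √a + Σ_{a ∈ 𝒜_{n−1}} √(a + C₂)). Then there exists a positive constant C depending only on C₁, C₂ and k such that Σ_{a ∈ 𝒜_n} a ≤ k^{n−1}·C·n²·a₀ for all n ≥ 1. -/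
set_option maxHeartbeats 1000000

lemma ms_cs (s : Multiset ℝ) (h : ∀ a ∈ s, 0 ≤ a) :
    ((s.map Real.sqrt).sum) ^ 2 ≤ (Multiset.card s : ℝ) * s.sum := by
  induction s using Multiset.induction_on with
  | empty => simp
  | cons a s ih =>
    have ha : 0 ≤ a := h a (Multiset.mem_cons_self a s)
    have hs : ∀ x ∈ s, 0 ≤ x := fun x hx => h x (Multiset.mem_cons_of_mem hx)
    have ihs := ih hs
    have hS : 0 ≤ s.sum := Multiset.sum_nonneg hs
    have hT : 0 ≤ (s.map Real.sqrt).sum := by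
      apply Multiset.sum_nonneg
      intro x hx
      obtain ⟨y, _, rfl⟩ := Multiset.mem_map.mp hx
      exact Real.sqrt_nonneg y
    set T := (s.map Real.sqrt).sum
    set S := s.sum
    set c := (Multiset.card s : ℝ)
    have hc : 0 ≤ c := Nat.cast_nonneg _
    have key : 2 * Real.sqrt a * T ≤ c * a + S := by
      have h1 : T ≤ Real.sqrt (c * S) := by
        calc T = Real.sqrt (T ^ 2) := (Real.sqrt_sq hT).symm
        _ ≤ _ := Real.sqrt_le_sqrt ihs
      have h2 : Real.sqrt a * Real.sqrt (c * S) = Real.sqrt (c * a) * Real.sqrt S := by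
        rw [← Real.sqrt_mul ha, ← Real.sqrt_mul (by positivity)]
        ring_nf
      nlinarith [two_mul_le_add_sq (Real.sqrt (c*a)) (Real.sqrt S),
        Real.sq_sqrt (mul_nonneg hc ha), Real.sq_sqrt hS, Real.sqrt_nonneg a,
        mul_le_mul_of_nonneg_left h1 (Real.sqrt_nonneg a)]
    simp only [Multiset.map_cons, Multiset.sum_cons, Multiset.card_cons]
    push_cast
    nlinarith [Real.sq_sqrt ha]

lemma ms_sqrt_sum_nonneg (s : Multiset ℝ) : 0 ≤ (s.map Real.sqrt).sum := by
  apply Multiset.sum_nonneg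
  intro x hx
  obtain ⟨y, _, rfl⟩ := Multiset.mem_map.mp hx
  exact Real.sqrt_nonneg y

lemma le_of_sq_le_sq'' {x y : ℝ} (hx : 0 ≤ x) (hy : 0 ≤ y) (h : x ^ 2 ≤ y ^ 2) :
    x ≤ y := by nlinarith

/-- if `𝒜_0 = {a₀}` with `a₀ ≥ 1`, each `𝒜_n` is a multiset of `kⁿ` positive
reals, and
`Σ_{𝒜_{n}} a ≤ Σ_{𝒜_{n-1}} a + C₁·(Σ_{𝒜_{n-1}} √a + Σ_{𝒜_{n-1}} √(a + C₂))` for `n ≥ 1`,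
then there is `C > 0` depending only on `C₁, C₂, k` with
`Σ_{𝒜_n} a ≤ k^{n-1}·C·n²·a₀` for all `n ≥ 1`. -/
theorem multiset_sum_growth_bound (k : ℕ) (hk : 1 ≤ k) (C₁ C₂ : ℝ)
    (hC₁ : 0 ≤ C₁) (hC₂ : 0 ≤ C₂) :
    ∃ C > (0 : ℝ), ∀ a₀ : ℝ, 1 ≤ a₀ →
      ∀ 𝒜 : ℕ → Multiset ℝ,
        𝒜 0 = {a₀} →
        (∀ n : ℕ, Multiset.card (𝒜 n) = k ^ n) →
        (∀ n : ℕ, ∀ a ∈ 𝒜 n, (0 : ℝ) < a) →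
        (∀ n : ℕ, (𝒜 (n + 1)).sum ≤ (𝒜 n).sum +
            C₁ * (((𝒜 n).map Real.sqrt).sum +
              ((𝒜 n).map (fun a => Real.sqrt (a + C₂))).sum)) →
        ∀ n : ℕ, (𝒜 (n + 1)).sum ≤ (k : ℝ) ^ n * C * ((n : ℝ) + 1) ^ 2 * a₀ := by
  set c : ℝ := 2 * C₁ + C₁ * Real.sqrt C₂ with hc
  have hc0 : 0 ≤ c := by positivity
  have hk0 : (1 : ℝ) ≤ (k : ℝ) := by exact_mod_cast hk
  have hkpos : (0 : ℝ) < (k : ℝ) := lt_of_lt_of_le zero_lt_one hk0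
  have hCpos : (0 : ℝ) < 4 * (k : ℝ) * (c + 1) ^ 2 :=
    mul_pos (mul_pos (by norm_num) hkpos) (pow_pos (by linarith) 2)
  refine ⟨4 * (k : ℝ) * (c + 1) ^ 2, hCpos, ?_⟩
  intro a₀ ha₀ 𝒜 h0 hcard hpos hrec n
  have ha₀0 : (0 : ℝ) ≤ a₀ := by linarith
  have hsa₀ : (1 : ℝ) ≤ Real.sqrt a₀ := by
    rw [show (1:ℝ) = Real.sqrt 1 by simp]
    exact Real.sqrt_le_sqrt ha₀
  have key : ∀ m : ℕ, (𝒜 m).sum ≤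
      (k : ℝ) ^ m * (((c + 1) * ((m : ℝ) + 1) * Real.sqrt a₀) ^ 2) := by
    intro m
    induction m with
    | zero =>
      simp only [h0, pow_zero, Nat.cast_zero, Multiset.sum_singleton, one_mul]
      nlinarith [Real.sq_sqrt ha₀0, mul_nonneg (mul_nonneg hc0 hc0) ha₀0,
        mul_nonneg hc0 ha₀0]
    | succ m ih =>
      set K : ℝ := (k : ℝ) ^ m with hK
      have hKpos : (0 : ℝ) < K := by positivity
      set b : ℝ := (c + 1) * ((m : ℝ) + 1) * Real.sqrt a₀ with hb
      have hb0 : 0 ≤ b := by positivity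
      set S : ℝ := (𝒜 m).sum with hSdef
      have hS0 : 0 ≤ S := Multiset.sum_nonneg fun x hx => (hpos m x hx).le
      have hcardm : (Multiset.card (𝒜 m) : ℝ) = K := by
        rw [hcard m]; push_cast; rfl
      -- bound on Σ √a
      have h1 : ((𝒜 m).map Real.sqrt).sum ≤ K * b := by
        apply le_of_sq_le_sq'' (ms_sqrt_sum_nonneg _) (by positivity)
        have hcs := ms_cs (𝒜 m) (fun a ha => (hpos m a ha).le)
        rw [hcardm] at hcs
        nlinarith [hcs, mul_le_mul_of_nonneg_left ih hKpos.le]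
      -- bound on Σ √(a + C₂)
      have h2 : ((𝒜 m).map (fun a => Real.sqrt (a + C₂))).sum ≤
          K * b + K * Real.sqrt C₂ := by
        have hmm : (𝒜 m).map (fun a => Real.sqrt (a + C₂)) =
            ((𝒜 m).map (fun a => a + C₂)).map Real.sqrt := by
          rw [Multiset.map_map]; rfl
        have hcs := ms_cs ((𝒜 m).map (fun a => a + C₂))
          (by intro a ha
              obtain ⟨y, hy, rfl⟩ := Multiset.mem_map.mp ha
              have := hpos m y hy
              linarith)
        have e2 : ((𝒜 m).map (fun _ : ℝ => C₂)).sum = K * C₂ := by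
          rw [Multiset.map_const', Multiset.sum_replicate, hcard m, nsmul_eq_mul]
          push_cast
          rfl
        have hsum : ((𝒜 m).map (fun a => a + C₂)).sum = S + K * C₂ := by
          rw [Multiset.sum_map_add, e2]
          simp [hSdef]
        rw [Multiset.card_map, hcardm, hsum] at hcs
        rw [hmm]
        apply le_of_sq_le_sq'' (ms_sqrt_sum_nonneg _) (by positivity)
        have hKC : K ^ 2 * C₂ = (K * Real.sqrt C₂) ^ 2 := by
          rw [mul_pow, Real.sq_sqrt hC₂]
        nlinarith [hcs, mul_le_mul_of_nonneg_left ih hKpos.le, hKC,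
          mul_nonneg (mul_nonneg hKpos.le hb0)
            (mul_nonneg hKpos.le (Real.sqrt_nonneg C₂))]
      have hstep : (𝒜 (m + 1)).sum ≤ K * (b ^ 2 + 2 * C₁ * b + C₁ * Real.sqrt C₂) := by
        have hr := hrec m
        rw [← hSdef] at hr
        have hmul := mul_le_mul_of_nonneg_left (add_le_add h1 h2) hC₁
        nlinarith [hr, ih, hmul]
      have hca : C₁ ≤ (c + 1) * Real.sqrt a₀ := by
        have h1 : C₁ ≤ c + 1 := by
          rw [hc]; nlinarith [mul_nonneg hC₁ (Real.sqrt_nonneg C₂)]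
        calc C₁ ≤ c + 1 := h1
        _ = (c + 1) * 1 := (mul_one _).symm
        _ ≤ (c + 1) * Real.sqrt a₀ := by
            exact mul_le_mul_of_nonneg_left hsa₀ (by linarith)
      have hcb : C₁ * Real.sqrt C₂ ≤ (c + 1) ^ 2 * a₀ := by
        nlinarith [hc, hc0, hC₁, sq_nonneg c,
          mul_le_mul_of_nonneg_left ha₀ (sq_nonneg (c + 1))]
      have hbig : b ^ 2 + 2 * C₁ * b + C₁ * Real.sqrt C₂ ≤
          (b + (c + 1) * Real.sqrt a₀) ^ 2 := by
        nlinarith [mul_le_mul_of_nonneg_right hca hb0, hcb, Real.sq_sqrt ha₀0,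
          hb0, hc0, mul_nonneg (by linarith : (0:ℝ) ≤ c + 1) (Real.sqrt_nonneg a₀)]
      have heq : (b + (c + 1) * Real.sqrt a₀) ^ 2 =
          ((c + 1) * (((m : ℝ) + 1) + 1) * Real.sqrt a₀) ^ 2 := by
        rw [hb]; ring
      calc (𝒜 (m + 1)).sum ≤ K * (b ^ 2 + 2 * C₁ * b + C₁ * Real.sqrt C₂) := hstep
        _ ≤ K * ((c + 1) * (((m : ℝ) + 1) + 1) * Real.sqrt a₀) ^ 2 := by
            rw [← heq]; exact mul_le_mul_of_nonneg_left hbig hKpos.le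
        _ ≤ (k : ℝ) ^ (m + 1) * ((c + 1) * (((m : ℝ) + 1) + 1) * Real.sqrt a₀) ^ 2 := by
            apply mul_le_mul_of_nonneg_right _ (by positivity)
            rw [pow_succ]
            exact le_mul_of_one_le_right hKpos.le hk0
        _ = (k : ℝ) ^ (m + 1) * (((c + 1) * (((m + 1 : ℕ) : ℝ) + 1) * Real.sqrt a₀) ^ 2) := by
            push_cast; ring
  have hkey := key (n + 1)
  have hsq : ((c + 1) * (((n + 1 : ℕ) : ℝ) + 1) * Real.sqrt a₀) ^ 2 =
      (c + 1) ^ 2 * (((n : ℝ) + 1) + 1) ^ 2 * a₀ := by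
    have hss := Real.sq_sqrt ha₀0
    push_cast
    nlinarith [hss]
  rw [hsq] at hkey
  have h4 : (((n : ℝ) + 1) + 1) ^ 2 ≤ 4 * ((n : ℝ) + 1) ^ 2 := by
    nlinarith [(Nat.cast_nonneg n : (0:ℝ) ≤ (n : ℝ))]
  calc (𝒜 (n + 1)).sum ≤ (k : ℝ) ^ (n + 1) * ((c + 1) ^ 2 * (((n : ℝ) + 1) + 1) ^ 2 * a₀) :=
        hkey
    _ ≤ (k : ℝ) ^ (n + 1) * ((c + 1) ^ 2 * (4 * ((n : ℝ) + 1) ^ 2) * a₀) := by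
        apply mul_le_mul_of_nonneg_left _ (by positivity)
        apply mul_le_mul_of_nonneg_right _ ha₀0
        exact mul_le_mul_of_nonneg_left h4 (by positivity)
    _ = (k : ℝ) ^ n * (4 * (k : ℝ) * (c + 1) ^ 2) * ((n : ℝ) + 1) ^ 2 * a₀ := by
        rw [pow_succ]; ring
end

section
/- Let X be a set, let k ≥ 1, and let f_1, …, f_k : X → X be maps; for a word w ∈ {1,…,k}ⁿ write f_w for the corresponding n-fold composite, and for g : X → ℝ and Q ∈ X write S_n(g, Q) = Σ_{w ∈ {1,…,k}ⁿ} g(f_w(Q)). Let hX : X → ℝ with hX ≥ 1 pointwise, let h : X → ℝ, and let β > 0, C₃ ≥ 0, C ≥ 0, δ' ≥ 0 be real numbers with k²·δ' < β². Assume: (i) |Σ_{i=1}^k h(f_i(Q)) − β·h(Q)| ≤ C₃·√(hX(Q)) for all Q ∈ X; (ii) S_n(hX, Q) ≤ C·kⁿ·δ'ⁿ·hX(Q) for all n ≥ 0 and all Q ∈ X. Then: (a) for every P ∈ X the limit ĥ(P) := lim_{n→∞} β^{−n}·S_n(h, P) exists; (b) ĥ satisfies Σ_{i=1}^k ĥ(f_i(P))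 = β·ĥ(P) for all P, and there is a constant C' ≥ 0, independent of P, such that |ĥ(P) − h(P)| ≤ C'·√(hX(P)) for all P ∈ X. -/
open Filter Topology

lemma heightSum_zero {X : Type*} {k : ℕ} (f : Fin k → X → X) (g : X → ℝ) (P : X) :
    heightSum f g 0 P = g P := by
  simp [heightSum, compWord]

lemma heightSum_succ {X : Type*} {k : ℕ} (f : Fin k → X → X) (g : X → ℝ) (n : ℕ) (P : X) :
    heightSum f g (n + 1) P = heightSum f (fun Q => ∑ i : Fin k, g (f i Q)) n P := by
  unfold heightSum
  calc ∑ w : Fin (n + 1) → Fin k, g (compWord f (List.ofFn w) P)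
      = ∑ p : Fin k × (Fin n → Fin k), g (f p.1 (compWord f (List.ofFn p.2) P)) := by
        refine (Fintype.sum_equiv (Fin.consEquiv fun _ => Fin k)
          (fun p => g (f p.1 (compWord f (List.ofFn p.2) P)))
          (fun w => g (compWord f (List.ofFn w) P)) ?_).symm
        intro p
        simp [Fin.consEquiv, List.ofFn_succ, compWord]
    _ = ∑ v : Fin n → Fin k, ∑ i : Fin k, g (f i (compWord f (List.ofFn v) P)) := by
        rw [Fintype.sum_prod_type]
        exact Finset.sum_comm

lemma heightSum_shift {X : Type*} {k : ℕ} (f : Fin k → X → X) (g : X → ℝ) (n : ℕ) (P : X) :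
    (∑ i : Fin k, heightSum f g n (f i P)) = heightSum f g (n + 1) P := by
  induction n generalizing g with
  | zero => simp [heightSum_zero, heightSum_succ]
  | succ n ih =>
    have h2 := ih (fun Q => ∑ i : Fin k, g (f i Q))
    simp only [heightSum_succ] at h2 ⊢
    exact h2

/-- existence of the canonical height. Given `hX ≥ 1`, `β > 0`, `C₃, C, δ' ≥ 0`
with `k²δ' < β²`, the eigendivisor height relation (i)
`|Σᵢ h(fᵢ Q) − β·h(Q)| ≤ C₃·√(hX Q)` and the growth bound (ii)
`S_n(hX, Q) ≤ C·kⁿ·δ'ⁿ·hX(Q)`, the limit `ĥ(P) = lim β^{−n}·S_n(h, P)` exists for every `P`,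
satisfies `Σᵢ ĥ(fᵢ P) = β·ĥ(P)`, and `|ĥ(P) − h(P)| ≤ C'·√(hX P)` for a constant `C'`
independent of `P`. -/
theorem canonical_height_exists {X : Type*} {k : ℕ} (hk : 1 ≤ k)
    (f : Fin k → X → X) (hX h : X → ℝ) (β C₃ C δ' : ℝ)
    (hβ : 0 < β) (hC₃ : 0 ≤ C₃) (hC : 0 ≤ C) (hδ' : 0 ≤ δ')
    (hlt : (k : ℝ) ^ 2 * δ' < β ^ 2)
    (hX1 : ∀ Q : X, 1 ≤ hX Q)
    (hi : ∀ Q : X, |(∑ i : Fin k, h (f i Q)) - β * h Q| ≤ C₃ * Real.sqrt (hX Q))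
    (hii : ∀ n : ℕ, ∀ Q : X, heightSum f hX n Q ≤ C * (k : ℝ) ^ n * δ' ^ n * hX Q) :
    ∃ hhat : X → ℝ,
      (∀ P : X, Tendsto (fun n : ℕ => heightSum f h n P / β ^ n) atTop (𝓝 (hhat P))) ∧
      (∀ P : X, (∑ i : Fin k, hhat (f i P)) = β * hhat P) ∧
      (∃ C' ≥ (0 : ℝ), ∀ P : X, |hhat P - h P| ≤ C' * Real.sqrt (hX P)) := by
  set r : ℝ := (k : ℝ) * Real.sqrt δ' / β with hr_def
  have hk0 : (0 : ℝ) < k := by exact_mod_cast hk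
  have hr0 : 0 ≤ r := by positivity
  have hr1 : r < 1 := by
    rw [hr_def, div_lt_one hβ]
    have h2 : ((k : ℝ) * Real.sqrt δ') ^ 2 < β ^ 2 := by
      rw [mul_pow, Real.sq_sqrt hδ']
      exact hlt
    exact lt_of_pow_lt_pow_left₀ 2 hβ.le h2
  have h1r : (0 : ℝ) < 1 - r := by linarith
  -- the key estimate
  have key : ∀ (P : X) (n : ℕ),
      |heightSum f h (n + 1) P - β * heightSum f h n P|
        ≤ C₃ * Real.sqrt C * Real.sqrt (hX P) * ((k : ℝ) * Real.sqrt δ') ^ n := by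
    intro P n
    have hxP : (0 : ℝ) ≤ hX P := le_trans zero_le_one (hX1 P)
    have e1 : heightSum f h (n + 1) P - β * heightSum f h n P
        = ∑ w : Fin n → Fin k,
            ((∑ i : Fin k, h (f i (compWord f (List.ofFn w) P)))
              - β * h (compWord f (List.ofFn w) P)) := by
      rw [heightSum_succ]
      unfold heightSum
      rw [Finset.sum_sub_distrib, Finset.mul_sum]
    rw [e1]
    have step1 : |∑ w : Fin n → Fin k,
            ((∑ i : Fin k, h (f i (compWord f (List.ofFn w) P)))
              - β * h (compWord f (List.ofFn w) P))|
        ≤ ∑ w : Fin n → Fin k, C₃ * Real.sqrt (hX (compWord f (List.ofFn w) P)) := by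
      refine (Finset.abs_sum_le_sum_abs _ _).trans (Finset.sum_le_sum fun w _ => ?_)
      exact hi _
    refine step1.trans ?_
    rw [← Finset.mul_sum]
    -- Cauchy–Schwarz
    have hcard : (Finset.univ : Finset (Fin n → Fin k)).card = k ^ n := by
      simp [Fintype.card_fun]
    have cs : (∑ w : Fin n → Fin k, Real.sqrt (hX (compWord f (List.ofFn w) P))) ^ 2
        ≤ (k : ℝ) ^ n * heightSum f hX n P := by
      have h3 := sq_sum_le_card_mul_sum_sq
        (s := (Finset.univ : Finset (Fin n → Fin k)))
        (f := fun w => Real.sqrt (hX (compWord f (List.ofFn w) P)))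
      rw [hcard] at h3
      refine h3.trans_eq ?_
      push_cast
      congr 1
      unfold heightSum
      exact Finset.sum_congr rfl fun w _ =>
        Real.sq_sqrt (le_trans zero_le_one (hX1 _))
    have sum_nonneg : 0 ≤ ∑ w : Fin n → Fin k, Real.sqrt (hX (compWord f (List.ofFn w) P)) :=
      Finset.sum_nonneg fun w _ => Real.sqrt_nonneg _
    have bnonneg : 0 ≤ Real.sqrt C * Real.sqrt (hX P) * ((k : ℝ) * Real.sqrt δ') ^ n := by
      positivity
    have hbound : (∑ w : Fin n → Fin k, Real.sqrt (hX (compWord f (List.ofFn w) P))) ^ 2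
        ≤ (Real.sqrt C * Real.sqrt (hX P) * ((k : ℝ) * Real.sqrt δ') ^ n) ^ 2 := by
      refine cs.trans ?_
      have e3 : (Real.sqrt C * Real.sqrt (hX P) * ((k : ℝ) * Real.sqrt δ') ^ n) ^ 2
          = C * hX P * ((k : ℝ) ^ n) ^ 2 * δ' ^ n := by
        have eδ : ((Real.sqrt δ') ^ n) ^ 2 = δ' ^ n := by
          rw [pow_right_comm, Real.sq_sqrt hδ']
        calc (Real.sqrt C * Real.sqrt (hX P) * ((k : ℝ) * Real.sqrt δ') ^ n) ^ 2
            = Real.sqrt C ^ 2 * Real.sqrt (hX P) ^ 2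
                * ((k : ℝ) ^ n) ^ 2 * ((Real.sqrt δ') ^ n) ^ 2 := by ring
          _ = C * hX P * ((k : ℝ) ^ n) ^ 2 * δ' ^ n := by
              rw [Real.sq_sqrt hC, Real.sq_sqrt hxP, eδ]
      rw [e3]
      calc (k : ℝ) ^ n * heightSum f hX n P
          ≤ (k : ℝ) ^ n * (C * (k : ℝ) ^ n * δ' ^ n * hX P) :=
            mul_le_mul_of_nonneg_left (hii n P) (by positivity)
        _ = C * hX P * ((k : ℝ) ^ n) ^ 2 * δ' ^ n := by ring
    have final : (∑ w : Fin n → Fin k, Real.sqrt (hX (compWord f (List.ofFn w) P)))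
        ≤ Real.sqrt C * Real.sqrt (hX P) * ((k : ℝ) * Real.sqrt δ') ^ n := by
      have h4 := Real.sqrt_le_sqrt hbound
      rwa [Real.sqrt_sq sum_nonneg, Real.sqrt_sq bnonneg] at h4
    calc C₃ * ∑ w : Fin n → Fin k, Real.sqrt (hX (compWord f (List.ofFn w) P))
        ≤ C₃ * (Real.sqrt C * Real.sqrt (hX P) * ((k : ℝ) * Real.sqrt δ') ^ n) :=
          mul_le_mul_of_nonneg_left final hC₃
      _ = C₃ * Real.sqrt C * Real.sqrt (hX P) * ((k : ℝ) * Real.sqrt δ') ^ n := by ring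
  -- geometric bound on consecutive distances
  have dist_bound : ∀ P : X, ∀ n : ℕ,
      dist (heightSum f h n P / β ^ n) (heightSum f h (n + 1) P / β ^ (n + 1))
        ≤ (C₃ * Real.sqrt C * Real.sqrt (hX P) / β) * r ^ n := by
    intro P n
    have hβn : (0 : ℝ) < β ^ (n + 1) := pow_pos hβ _
    have hβn' : (β : ℝ) ^ n ≠ 0 := (pow_pos hβ n).ne'
    rw [Real.dist_eq]
    have e : heightSum f h n P / β ^ n - heightSum f h (n + 1) P / β ^ (n + 1)
        = (β * heightSum f h n P - heightSum f h (n + 1) P) / β ^ (n + 1) := by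
      rw [pow_succ]
      field_simp
    rw [e, abs_div, abs_of_pos hβn, abs_sub_comm, div_le_iff₀ hβn]
    refine (key P n).trans (le_of_eq ?_)
    have e2 : C₃ * Real.sqrt C * Real.sqrt (hX P) / β * r ^ n * β ^ (n + 1)
        = C₃ * Real.sqrt C * Real.sqrt (hX P) * ((k : ℝ) * Real.sqrt δ') ^ n
            * (β ^ (n + 1) / β ^ (n + 1)) := by
      rw [hr_def, div_pow, pow_succ]
      ring
    rw [e2, div_self hβn.ne', mul_one]
  -- existence of the limit
  have cauchy : ∀ P : X, ∃ L : ℝ,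
      Tendsto (fun n : ℕ => heightSum f h n P / β ^ n) atTop (𝓝 L) := fun P =>
    cauchySeq_tendsto_of_complete
      (cauchySeq_of_le_geometric r _ hr1 (dist_bound P))
  choose hhat hlim using cauchy
  refine ⟨hhat, hlim, ?_, ?_⟩
  · -- functional equation
    intro P
    have h1 : Tendsto (fun n : ℕ => ∑ i : Fin k, heightSum f h n (f i P) / β ^ n)
        atTop (𝓝 (∑ i : Fin k, hhat (f i P))) :=
      tendsto_finset_sum _ fun i _ => hlim (f i P)
    have h2 : (fun n : ℕ => ∑ i : Fin k, heightSum f h n (f i P) / β ^ n)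
        = fun n : ℕ => β * (heightSum f h (n + 1) P / β ^ (n + 1)) := by
      funext n
      have hβn' : (β : ℝ) ^ n ≠ 0 := (pow_pos hβ n).ne'
      rw [← Finset.sum_div, heightSum_shift, pow_succ]
      field_simp
    rw [h2] at h1
    have h3 : Tendsto (fun n : ℕ => β * (heightSum f h (n + 1) P / β ^ (n + 1)))
        atTop (𝓝 (β * hhat P)) :=
      ((hlim P).comp (tendsto_add_atTop_nat 1)).const_mul β
    exact tendsto_nhds_unique h1 h3
  · -- the constant C'
    refine ⟨C₃ * Real.sqrt C / (β * (1 - r)),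
      div_nonneg (mul_nonneg hC₃ (Real.sqrt_nonneg _)) (mul_pos hβ h1r).le, fun P => ?_⟩
    have hd := dist_le_of_le_geometric_of_tendsto₀ r _ hr1 (dist_bound P) (hlim P)
    rw [Real.dist_eq] at hd
    simp only [pow_zero, div_one, heightSum_zero] at hd
    rw [abs_sub_comm] at hd
    refine hd.trans (le_of_eq ?_)
    rw [div_div]
    field_simp
end

section
/- Let X be a set, let k ≥ 1, and let f_1, …, f_k : X → X be maps; for a word w ∈ {1,…,k}ⁿ write f_w for the corresponding n-fold composite, and for g : X → ℝ and Q ∈ X write S_n(g, Q) = Σ_{w ∈ {1,…,k}ⁿ} g(f_w(Q)). Let hX : X → ℝ with hX ≥ 1 pointwise, let h : X → ℝ, and let δ > 1 and β = k·δ, together with constants C₃ ≥ 0, a ≥ 0, b ≥ 0. Assume: (i) |Σ_{i=1}^k h(f_i(Q)) − β·h(Q)| ≤ C₃·√(hX(Q)) for all Q ∈ X; (ii) for every ε > 0 there is C_ε ≥ 0 with S_n(hX, Q) ≤ C_ε·kⁿ·(δ+ε)ⁿ·hX(Q) for all n ≥ 0 and all Q ∈ X; (iii) |h(Q)| ≤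 a·hX(Q) + b for all Q ∈ X. Let P ∈ X and let ĥ(P) = lim_{n→∞} β^{−n}·S_n(h, P) (this limit exists by (i) and (ii)). If ĥ(P) ≠ 0, then the limit lim_{n→∞} (1/k)·S_n(hX, P)^{1/n} exists and equals δ. -/
open Filter Topology

/-!
Write `uₙ = S_n(hX, P)`. Above, (ii) gives `uₙ ≤ C_ε hX(P) (k(δ + ε))ⁿ`. Below, summing (iii) over
words gives `|S_n(h, P)| ≤ a uₙ + b kⁿ`; since `S_n(h, P) ~ ĥ(P) (kδ)ⁿ` with `ĥ(P) ≠ 0` and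
`kⁿ = o((kδ)ⁿ)`, this forces `uₙ ≥ c (kδ)ⁿ` for some `c > 0` and all large `n`. Taking `n`-th roots
squeezes `uₙ^{1/n}` to `kδ`.
-/

namespace Real

theorem tendsto_const_rpow_inv_natCast {c : ℝ} (hc : 0 < c) :
    Tendsto (fun n : ℕ => c ^ (n : ℝ)⁻¹) atTop (𝓝 1) := by
  simpa [Function.comp_def] using
    (continuousAt_const_rpow hc.ne').tendsto.comp tendsto_inv_atTop_nhds_zero_nat

theorem mul_pow_rpow_inv_natCast {c x : ℝ} (hc : 0 ≤ c) (hx : 0 ≤ x) {n : ℕ} (hn : n ≠ 0) :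
    (c * x ^ n) ^ (n : ℝ)⁻¹ = c ^ (n : ℝ)⁻¹ * x := by
  rw [mul_rpow hc (pow_nonneg hx n), pow_rpow_inv_natCast hx hn]

theorem eventually_lt_rpow_inv_natCast_of_mul_pow_le {u : ℕ → ℝ} {c r x : ℝ} (hc : 0 < c)
    (hr : 0 ≤ r) (hx : x < r) (hu : ∀ᶠ n in atTop, c * r ^ n ≤ u n) :
    ∀ᶠ n : ℕ in atTop, x < u n ^ (n : ℝ)⁻¹ := by
  have hlim := (tendsto_const_rpow_inv_natCast hc).mul_const r
  rw [one_mul] at hlim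
  filter_upwards [hlim.eventually (eventually_gt_nhds hx), hu, eventually_ne_atTop 0]
    with n hxn hun hn
  calc x < c ^ (n : ℝ)⁻¹ * r := hxn
    _ = (c * r ^ n) ^ (n : ℝ)⁻¹ := (mul_pow_rpow_inv_natCast hc.le hr hn).symm
    _ ≤ u n ^ (n : ℝ)⁻¹ := rpow_le_rpow (by positivity) hun (by positivity)

theorem eventually_rpow_inv_natCast_lt_of_le_mul_pow {u : ℕ → ℝ} {D s x : ℝ} (hs : 0 ≤ s)
    (hx : s < x) (hu₀ : ∀ᶠ n in atTop, 0 ≤ u n) (hu : ∀ᶠ n in atTop, u n ≤ D * s ^ n) :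
    ∀ᶠ n : ℕ in atTop, u n ^ (n : ℝ)⁻¹ < x := by
  have hD₀ : 0 < max D 1 := lt_max_of_lt_right one_pos
  have hlim := (tendsto_const_rpow_inv_natCast hD₀).mul_const s
  rw [one_mul] at hlim
  filter_upwards [hlim.eventually (eventually_lt_nhds hx), hu₀, hu, eventually_ne_atTop 0]
    with n hxn hun₀ hun hn
  have hD : u n ≤ max D 1 * s ^ n :=
    hun.trans (mul_le_mul_of_nonneg_right (le_max_left D 1) (pow_nonneg hs n))
  calc u n ^ (n : ℝ)⁻¹ ≤ (max D 1 * s ^ n) ^ (n : ℝ)⁻¹ := rpow_le_rpow hun₀ hD (by positivity)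
    _ = max D 1 ^ (n : ℝ)⁻¹ * s := mul_pow_rpow_inv_natCast hD₀.le hs hn
    _ < x := hxn

theorem tendsto_rpow_inv_natCast_of_geometric_bounds {u : ℕ → ℝ} {r : ℝ} (hr : 0 < r)
    (hlow : ∃ c > 0, ∀ᶠ n in atTop, c * r ^ n ≤ u n)
    (hup : ∀ s > r, ∃ D, ∀ᶠ n in atTop, u n ≤ D * s ^ n) :
    Tendsto (fun n : ℕ => u n ^ (n : ℝ)⁻¹) atTop (𝓝 r) := by
  obtain ⟨c, hc, hcu⟩ := hlow
  refine tendsto_order.2 ⟨fun x hx => eventually_lt_rpow_inv_natCast_of_mul_pow_le hc hr.le hx hcu,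
    fun x hx => ?_⟩
  obtain ⟨D, hD⟩ := hup ((r + x) / 2) (by linarith)
  have hu₀ : ∀ᶠ n in atTop, 0 ≤ u n := hcu.mono fun n hn =>
    (mul_nonneg hc.le (pow_nonneg hr.le n)).trans hn
  exact eventually_rpow_inv_natCast_lt_of_le_mul_pow (by linarith) (by linarith) hu₀ hD

end Real

theorem exists_pos_mul_pow_le_of_tendsto_div_pow {s u : ℕ → ℝ} {a b κ β L : ℝ} (ha : 0 ≤ a)
    (hκ : 0 ≤ κ) (hκβ : κ < β) (hsu : ∀ n, |s n| ≤ a * u n + b * κ ^ n)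
    (hs : Tendsto (fun n => s n / β ^ n) atTop (𝓝 L)) (hL : L ≠ 0) :
    ∃ c > 0, ∀ᶠ n in atTop, c * β ^ n ≤ u n := by
  have hβ : 0 < β := hκ.trans_lt hκβ
  have hsmall : Tendsto (fun n => b * κ ^ n / β ^ n) atTop (𝓝 0) := by
    simpa [div_pow, mul_div_assoc] using (tendsto_pow_atTop_nhds_zero_of_lt_one
      (div_nonneg hκ hβ.le) ((div_lt_one hβ).2 hκβ)).const_mul b
  have hmain : Tendsto (fun n => (|s n| - b * κ ^ n) / β ^ n) atTop (𝓝 |L|) := by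
    refine (sub_zero |L| ▸ hs.abs.sub hsmall).congr fun n => ?_
    rw [abs_div, abs_of_pos (pow_pos hβ n), sub_div]
  have hev : ∀ᶠ n in atTop, |L| / 2 * β ^ n < a * u n := by
    filter_upwards [hmain.eventually (eventually_gt_nhds (half_lt_self (abs_pos.2 hL)))] with n hn
    rw [lt_div_iff₀ (pow_pos hβ n)] at hn
    linarith [hsu n]
  have ha' : 0 < a := by
    obtain ⟨n, hn⟩ := hev.exists
    refine ha.lt_of_ne fun h₀ => ?_
    rw [← h₀, zero_mul] at hn
    exact hn.not_ge (by positivity)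
  refine ⟨|L| / (2 * a), by positivity, hev.mono fun n hn => ?_⟩
  rw [div_mul_eq_mul_div, div_le_iff₀ (by positivity)]
  linarith

theorem abs_heightSum_le {X : Type*} {k : ℕ} (f : Fin k → X → X) {g g' : X → ℝ} {a b : ℝ}
    (hg : ∀ Q, |g Q| ≤ a * g' Q + b) (n : ℕ) (P : X) :
    |heightSum f g n P| ≤ a * heightSum f g' n P + b * k ^ n := by
  calc |heightSum f g n P| ≤ ∑ w : Fin n → Fin k, |g (compWord f (List.ofFn w) P)| :=
        Finset.abs_sum_le_sum_abs _ _
    _ ≤ ∑ w : Fin n → Fin k, (a * g' (compWord f (List.ofFn w) P) + b) :=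
        Finset.sum_le_sum fun w _ => hg _
    _ = a * heightSum f g' n P + b * k ^ n := by
        simp [heightSum, Finset.sum_add_distrib, Finset.mul_sum, mul_comm]

theorem canonical_height_nonzero_arithmetic_degree_general {X : Type*} {k : ℕ} (hk : 1 ≤ k)
    (f : Fin k → X → X) (hX h : X → ℝ) (δ a b : ℝ)
    (hδ : 1 < δ) (ha : 0 ≤ a)
    (hii : ∀ ε > (0 : ℝ), ∃ Cε ≥ (0 : ℝ), ∀ n : ℕ, ∀ Q : X,
      heightSum f hX n Q ≤ Cε * (k : ℝ) ^ n * (δ + ε) ^ n * hX Q)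
    (hiii : ∀ Q : X, |h Q| ≤ a * hX Q + b)
    (P : X) (L : ℝ)
    (hlim : Tendsto (fun n : ℕ => heightSum f h n P / ((k : ℝ) * δ) ^ n) atTop (𝓝 L))
    (hL : L ≠ 0) :
    Tendsto (fun n : ℕ => (1 / (k : ℝ)) * heightSum f hX n P ^ ((n : ℝ)⁻¹)) atTop
      (𝓝 δ) := by
  have hk₀ : (0 : ℝ) < k := by exact_mod_cast hk
  have hlow := exists_pos_mul_pow_le_of_tendsto_div_pow ha hk₀.le
    (lt_mul_of_one_lt_right hk₀ hδ) (fun n => abs_heightSum_le f hiii n P) hlim hL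
  have hup : ∀ s > k * δ, ∃ D, ∀ᶠ n in atTop, heightSum f hX n P ≤ D * s ^ n := by
    intro s hs
    obtain ⟨C, -, hC⟩ := hii (s / k - δ) (sub_pos.2 ((lt_div_iff₀ hk₀).2 (by linarith)))
    refine ⟨C * hX P, Eventually.of_forall fun n => (hC n P).trans_eq ?_⟩
    rw [add_sub_cancel, div_pow]
    field_simp
  have hroot := Real.tendsto_rpow_inv_natCast_of_geometric_bounds
    (mul_pos hk₀ (one_pos.trans hδ)) hlow hup
  simpa [hk₀.ne'] using hroot.const_mul (1 / (k : ℝ))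

/-- with `δ > 1`, `β = k·δ`, the eigendivisor relation (i), the growth bound (ii)
for every `ε > 0`, and the comparison (iii), if the canonical height
`ĥ(P) = lim β^{−n}·S_n(h, P)` of a point `P` is nonzero, then the arithmetic degree of `P`
exists and equals `δ`: `(1/k)·S_n(hX, P)^{1/n} → δ`. -/
theorem canonical_height_nonzero_arithmetic_degree {X : Type*} {k : ℕ} (hk : 1 ≤ k)
    (f : Fin k → X → X) (hX h : X → ℝ) (δ C₃ a b : ℝ)
    (hδ : 1 < δ) (hC₃ : 0 ≤ C₃) (ha : 0 ≤ a) (hb : 0 ≤ b)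
    (hX1 : ∀ Q : X, 1 ≤ hX Q)
    (hi : ∀ Q : X,
      |(∑ i : Fin k, h (f i Q)) - ((k : ℝ) * δ) * h Q| ≤ C₃ * Real.sqrt (hX Q))
    (hii : ∀ ε > (0 : ℝ), ∃ Cε ≥ (0 : ℝ), ∀ n : ℕ, ∀ Q : X,
      heightSum f hX n Q ≤ Cε * (k : ℝ) ^ n * (δ + ε) ^ n * hX Q)
    (hiii : ∀ Q : X, |h Q| ≤ a * hX Q + b)
    (P : X) (L : ℝ)
    (hlim : Tendsto (fun n : ℕ => heightSum f h n P / ((k : ℝ) * δ) ^ n) atTop (𝓝 L))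
    (hL : L ≠ 0) :
    Tendsto (fun n : ℕ => (1 / (k : ℝ)) * heightSum f hX n P ^ ((n : ℝ)⁻¹)) atTop
      (𝓝 δ) :=
  canonical_height_nonzero_arithmetic_degree_general hk f hX h δ a b hδ ha hii hiii P L hlim hL
end

section
/- Let V be a finite-dimensional normed real vector space and let C ⊆ V be a subset that is closed under addition and under multiplication by nonnegative real scalars and whose linear span is all of V. Then for every linear map A : V → V the quantity N(A) := sup{ ‖A v‖ / ‖v‖ : v ∈ C, v ≠ 0 } is finite, and N is a norm on the real vector space of linear endomorphisms of V; that is, N(A + B) ≤ N(A) + N(B) for all A, B, N(c·A) = |c|·N(A) for all c ∈ ℝ and all A, and N(A) = 0 if and only if A = 0. -/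
/-- The operator "norm" of a linear endomorphism computed over a spanning cone `C`:
the supremum of `‖A v‖ / ‖v‖` over nonzero `v ∈ C`. -/
noncomputable def coneOpNorm {V : Type*} [NormedAddCommGroup V] [NormedSpace ℝ V]
    (C : Set V) (A : V →ₗ[ℝ] V) : ℝ :=
  sSup ((fun v => ‖A v‖ / ‖v‖) '' (C \ {0}))

/-- if `C` is a cone in a finite-dimensional normed real vector space `V`
(closed under addition and nonnegative scalar multiplication) whose linear span is all
of `V`, then `N(A) = sup_{v ∈ C, v ≠ 0} ‖A v‖/‖v‖` is finite for every linear map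
`A : V → V`, and `N` is a norm on the endomorphisms of `V`: it is subadditive,
absolutely homogeneous, and vanishes exactly at `A = 0`. -/
theorem coneOpNorm_is_norm {V : Type*} [NormedAddCommGroup V] [NormedSpace ℝ V]
    [FiniteDimensional ℝ V] (C : Set V)
    (hadd : ∀ x ∈ C, ∀ y ∈ C, x + y ∈ C)
    (hsmul : ∀ c : ℝ, 0 ≤ c → ∀ x ∈ C, c • x ∈ C)
    (hspan : Submodule.span ℝ C = ⊤) :
    (∀ A : V →ₗ[ℝ] V, BddAbove ((fun v => ‖A v‖ / ‖v‖) '' (C \ {0}))) ∧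
    (∀ A B : V →ₗ[ℝ] V, coneOpNorm C (A + B) ≤ coneOpNorm C A + coneOpNorm C B) ∧
    (∀ (c : ℝ) (A : V →ₗ[ℝ] V), coneOpNorm C (c • A) = |c| * coneOpNorm C A) ∧
    (∀ A : V →ₗ[ℝ] V, coneOpNorm C A = 0 ↔ A = 0) := by
  have hbdd : ∀ A : V →ₗ[ℝ] V, BddAbove ((fun v => ‖A v‖ / ‖v‖) '' (C \ {0})) := by
    intro A
    refine ⟨‖LinearMap.toContinuousLinearMap A‖, ?_⟩
    rintro x ⟨v, ⟨hv, hv0⟩, rfl⟩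
    have hv0' : v ≠ 0 := hv0
    have h := (LinearMap.toContinuousLinearMap A).le_opNorm v
    rw [div_le_iff₀ (norm_pos_iff.mpr hv0')]
    simpa using h
  have hnonneg : ∀ A : V →ₗ[ℝ] V, 0 ≤ coneOpNorm C A := by
    intro A
    apply Real.sSup_nonneg
    rintro x ⟨v, hv, rfl⟩
    positivity
  have hzero : ∀ A : V →ₗ[ℝ] V, A = 0 → coneOpNorm C A = 0 := by
    intro A hA
    subst hA
    refine le_antisymm (Real.sSup_le ?_ le_rfl) (hnonneg 0)
    rintro x ⟨v, hv, rfl⟩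
    simp
  refine ⟨hbdd, ?_, ?_, ?_⟩
  · intro A B
    refine Real.sSup_le ?_ (add_nonneg (hnonneg A) (hnonneg B))
    rintro x ⟨v, hv, rfl⟩
    have hvne : v ≠ 0 := hv.2
    have h1 : ‖A v‖ / ‖v‖ ≤ coneOpNorm C A := le_csSup (hbdd A) ⟨v, hv, rfl⟩
    have h2 : ‖B v‖ / ‖v‖ ≤ coneOpNorm C B := le_csSup (hbdd B) ⟨v, hv, rfl⟩
    simp only [LinearMap.add_apply]
    calc ‖A v + B v‖ / ‖v‖ ≤ (‖A v‖ + ‖B v‖) / ‖v‖ := by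
          gcongr
          exact norm_add_le _ _
      _ = ‖A v‖ / ‖v‖ + ‖B v‖ / ‖v‖ := add_div _ _ _
      _ ≤ _ := add_le_add h1 h2
  · intro c A
    rcases eq_or_ne c 0 with rfl | hc
    · rw [hzero (0 • A) (zero_smul _ _), abs_zero, zero_mul]
    · have hcpos : 0 < |c| := abs_pos.mpr hc
      have himg : ((fun v => ‖(c • A) v‖ / ‖v‖) '' (C \ {0}))
          = (fun x => |c| * x) '' ((fun v => ‖A v‖ / ‖v‖) '' (C \ {0})) := by
        rw [Set.image_image]
        apply Set.image_congr
        intro v _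
        simp [norm_smul, mul_div_assoc]
      have hbdd' := hbdd (c • A)
      rw [himg] at hbdd'
      simp only [coneOpNorm]
      rw [himg]
      apply le_antisymm
      · refine Real.sSup_le ?_ (mul_nonneg (abs_nonneg c) (hnonneg A))
        rintro x ⟨y, hy, rfl⟩
        exact mul_le_mul_of_nonneg_left (le_csSup (hbdd A) hy) (abs_nonneg c)
      · rw [← le_div_iff₀' hcpos]
        refine Real.sSup_le ?_ ?_
        · intro y hy
          rw [le_div_iff₀' hcpos]
          exact le_csSup hbdd' ⟨y, hy, rfl⟩
        · apply div_nonneg _ (abs_nonneg c)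
          apply Real.sSup_nonneg
          rintro x ⟨y, ⟨v, hv, rfl⟩, rfl⟩
          positivity
  · intro A
    refine ⟨fun h => ?_, hzero A⟩
    apply LinearMap.ext_on hspan
    intro x hx
    rcases eq_or_ne x 0 with rfl | hx0
    · simp
    · have hmem : ‖A x‖ / ‖x‖ ∈ ((fun v => ‖A v‖ / ‖v‖) '' (C \ {0})) :=
        ⟨x, ⟨hx, hx0⟩, rfl⟩
      have hle : ‖A x‖ / ‖x‖ ≤ 0 := h ▸ le_csSup (hbdd A) hmem
      have hxpos : 0 < ‖x‖ := norm_pos_iff.mpr hx0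
      have : ‖A x‖ ≤ 0 := by
        have h' := (div_le_iff₀ hxpos).mp hle
        simpa using h'
      simp [norm_le_zero_iff.mp this]
end
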